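/- Let S ⊆ ℝ³ be invariant under all rotations about a unit axis u, and suppose S is not invariant under all of SO(3). If S is invariant under R_v(2π/n) for some unit vector v not orthogonal and not collinear to u and some integer n ≥ 1, then n = 1; i.e., S has no nontrivial finite rotational symmetry about any axis oblique to u. -/

import Mathlib

/-- Rotation of ℝ³ by angle `φ` about the axis through the origin in direction `u`
(Rodrigues' formula; when `‖u‖ = 1` this is the usual rotation `R_u(φ)`). -/
noncomputable def rot (u : EuclideanSpace ℝ (Fin 3)) (φ : ℝ) (x : EuclideanSpace ℝ (Fin 3)) :
    EuclideanSpace ℝ (Fin 3) :=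
  let c : EuclideanSpace ℝ (Fin 3) := WithLp.toLp 2 (crossProduct (WithLp.ofLp u) (WithLp.ofLp x))
  Real.cos φ • x + Real.sin φ • c + ((1 - Real.cos φ) * (inner ℝ u x : ℝ)) • u

/-- SO(3): the subgroup of the orthogonal group of 3×3 real matrices consisting of
matrices of determinant 1 (acting on ℝ³ by matrix-vector multiplication). -/
def SO3 : Subgroup (Matrix.orthogonalGroup (Fin 3) ℝ) where
  carrier := {A | (A : Matrix (Fin 3) (Fin 3) ℝ).det = 1}
  one_mem' := by simp
  mul_mem' := by
    intro a b ha hb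
    simp only [Set.mem_setOf_eq] at *
    rw [Submonoid.coe_mul, Matrix.det_mul, ha, hb, one_mul]
  inv_mem' := by
    intro a ha
    simp only [Set.mem_setOf_eq] at *
    have h : ((a⁻¹ : Matrix.orthogonalGroup (Fin 3) ℝ) : Matrix (Fin 3) (Fin 3) ℝ) =
        star (a : Matrix (Fin 3) (Fin 3) ℝ) := rfl
    rw [h, Matrix.star_eq_conjTranspose, Matrix.det_conjTranspose, ha, star_one]

/-!
If `f ∈ SO(3)` maps `S` onto itself then `f ∘ rot w φ = rot (f w) φ ∘ f`, so `f` permutes the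
axes `w` about which `S` is invariant under all rotations. For `n ≥ 2`, rotating `u` about `v`
by `2π / n` therefore yields a second such axis `u'`, and `|⟪u, u'⟫| < 1` because `v` is
oblique to `u`. Rotating `u` about an axis `b` and then about `u` reaches every unit `y` with
`⟪u, y⟫ ≥ 2 ⟪u, b⟫ ^ 2 - 1`: the cap of axes around `u` doubles its angular radius at each step
until it is the whole sphere. Every element of SO(3) is `rot w φ ∘ rot u γ` for some unit `w`,
so `S` would be invariant under all of SO(3).
-/

open Real Matrix WithLp
open scoped RealInnerProductSpace

section InnerProductSpace

variable {E : Type*} [NormedAddCommGroup E] [InnerProductSpace ℝ E]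

lemma abs_real_inner_lt_one_of_norm_eq_one {x y : E} (hx : ‖x‖ = 1) (hy : ‖y‖ = 1)
    (hxy : x ≠ y) (hxy' : x ≠ -y) : |⟪x, y⟫| < 1 := by
  obtain ⟨h₁, h₂⟩ := real_inner_mem_Icc_of_norm_eq_one hx hy
  refine abs_lt.mpr ⟨h₁.lt_of_ne ?_, h₂.lt_of_ne ?_⟩
  · exact fun h => hxy' ((inner_eq_neg_one_iff_of_norm_eq_one hx hy).mp h.symm)
  · exact fun h => hxy ((inner_eq_one_iff_of_norm_eq_one hx hy).mp h)

variable [FiniteDimensional ℝ E]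

lemma Submodule.exists_norm_eq_one_mem_orthogonal (K : Submodule ℝ E)
    (hK : Module.finrank ℝ K < Module.finrank ℝ E) : ∃ e ∈ Kᗮ, ‖e‖ = 1 := by
  have hKo : Kᗮ ≠ ⊥ := by
    intro h
    have := K.finrank_add_finrank_orthogonal
    rw [h, finrank_bot] at this
    omega
  obtain ⟨z, hz, hz0⟩ := Submodule.exists_mem_ne_zero_of_ne_bot hKo
  exact ⟨‖z‖⁻¹ • z, Kᗮ.smul_mem _ hz, norm_smul_inv_norm hz0⟩

lemma exists_norm_eq_one_inner_eq_zero (h : 2 < Module.finrank ℝ E) (a b : E) :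
    ∃ e : E, ‖e‖ = 1 ∧ ⟪a, e⟫ = 0 ∧ ⟪b, e⟫ = 0 := by
  obtain ⟨e, he, he1⟩ := (Submodule.span ℝ (Set.range ![a, b])).exists_norm_eq_one_mem_orthogonal
    ((finrank_range_le_card _).trans_lt (by simpa using h))
  rw [Submodule.mem_orthogonal] at he
  exact ⟨e, he1, he a (Submodule.subset_span ⟨0, rfl⟩), he b (Submodule.subset_span ⟨1, rfl⟩)⟩

lemma exists_norm_eq_one_inner_eq (h : 1 < Module.finrank ℝ E) {u : E} (hu : ‖u‖ = 1) {t : ℝ}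
    (ht : t ∈ Set.Icc (-1) 1) : ∃ b : E, ‖b‖ = 1 ∧ ⟪u, b⟫ = t := by
  obtain ⟨e, he, he1⟩ := (ℝ ∙ u).exists_norm_eq_one_mem_orthogonal
    ((finrank_span_singleton (norm_ne_zero_iff.mp (hu ▸ one_ne_zero))).trans_lt h)
  have hue : ⟪u, e⟫ = 0 := Submodule.mem_orthogonal_singleton_iff_inner_right.mp he
  refine ⟨t • u + √(1 - t ^ 2) • e, ?_, ?_⟩
  · have hs : √(1 - t ^ 2) ^ 2 = 1 - t ^ 2 := sq_sqrt (by nlinarith [ht.1, ht.2])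
    rw [norm_eq_sqrt_real_inner, sqrt_eq_one]
    simp only [inner_add_left, inner_add_right, real_inner_smul_left, real_inner_smul_right,
      inner_self_eq_one_of_norm_eq_one hu, inner_self_eq_one_of_norm_eq_one he1, hue,
      real_inner_comm u e]
    linear_combination hs
  · simp [inner_add_right, real_inner_smul_right, hu, hue]

end InnerProductSpace

namespace ObliqueAxis

local notation "E3" => EuclideanSpace ℝ (Fin 3)

def cross (a b : E3) : E3 := toLp 2 (ofLp a ⨯₃ ofLp b)

lemma rot_def (u : E3) (φ : ℝ) (x : E3) :
    rot u φ x = cos φ • x + sin φ • cross u x + ((1 - cos φ) * ⟪u, x⟫) • u := rfl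

lemma inner_eq_dotProduct (x y : E3) : ⟪x, y⟫ = ofLp x ⬝ᵥ ofLp y := by
  rw [EuclideanSpace.inner_eq_star_dotProduct, star_trivial, dotProduct_comm]

lemma inner_self_cross (a b : E3) : ⟪a, cross a b⟫ = 0 := by
  rw [inner_eq_dotProduct]; exact dot_self_cross _ _

lemma inner_cross_self (a b : E3) : ⟪b, cross a b⟫ = 0 := by
  rw [inner_eq_dotProduct]; exact dot_cross_self _ _

lemma inner_cross_cross (a b c d : E3) :
    ⟪cross a b, cross c d⟫ = ⟪a, c⟫ * ⟪b, d⟫ - ⟪a, d⟫ * ⟪b, c⟫ := by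
  simp only [inner_eq_dotProduct]; exact cross_dot_cross _ _ _ _

lemma cross_cross (a b c : E3) : cross a (cross b c) = ⟪a, c⟫ • b - ⟪a, b⟫ • c := by
  simp only [cross, inner_eq_dotProduct, ofLp_toLp, cross_cross_eq_smul_sub_smul',
    dotProduct_comm (ofLp b)]
  rfl

lemma cross_self (a : E3) : cross a a = 0 := by simp [cross]

lemma cross_anticomm (a b : E3) : cross a b = -cross b a := by
  rw [cross, cross, ← _root_.cross_anticomm, toLp_neg]

@[simp] lemma cross_zero (a : E3) : cross a 0 = 0 := by simp [cross]

lemma cross_add (a b c : E3) : cross a (b + c) = cross a b + cross a c := by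
  simp [cross]

lemma cross_smul (a : E3) (r : ℝ) (b : E3) : cross a (r • b) = r • cross a b := by
  simp [cross]

lemma inner_cross_left (a b c : E3) : ⟪cross a b, c⟫ = ⟪a, cross b c⟫ := by
  simp only [inner_eq_dotProduct, cross]
  rw [dotProduct_comm, triple_product_permutation]

lemma inner_eq_fin_three (x y : E3) : ⟪x, y⟫ = x 0 * y 0 + x 1 * y 1 + x 2 * y 2 := by
  simp [PiLp.inner_apply, Fin.sum_univ_three, mul_comm]

lemma cross_apply_zero (a b : E3) : cross a b 0 = a 1 * b 2 - a 2 * b 1 := by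
  simp [cross, cross_apply]

lemma cross_apply_one (a b : E3) : cross a b 1 = a 2 * b 0 - a 0 * b 2 := by
  simp [cross, cross_apply]

lemma cross_apply_two (a b : E3) : cross a b 2 = a 0 * b 1 - a 1 * b 0 := by
  simp [cross, cross_apply]

lemma rot_apply (u : E3) (φ : ℝ) (x : E3) (i : Fin 3) :
    rot u φ x i = cos φ * x i + sin φ * cross u x i + (1 - cos φ) * ⟪u, x⟫ * u i := by
  simp [rot_def]

@[simp] lemma rot_zero (u x : E3) : rot u 0 x = x := by simp [rot_def]

lemma rot_add (u : E3) (φ : ℝ) (x y : E3) : rot u φ (x + y) = rot u φ x + rot u φ y := by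
  simp only [rot_def, cross_add, inner_add_right]; module

lemma rot_smul (u : E3) (φ r : ℝ) (x : E3) : rot u φ (r • x) = r • rot u φ x := by
  simp only [rot_def, cross_smul, real_inner_smul_right]; module

section UnitAxis

variable {u : E3} (hu : ‖u‖ = 1)
include hu

lemma rot_self (φ : ℝ) : rot u φ u = u := by
  rw [rot_def, cross_self, inner_self_eq_one_of_norm_eq_one hu]; module

lemma inner_rot (φ : ℝ) (x : E3) : ⟪u, rot u φ x⟫ = ⟪u, x⟫ := by
  simp only [rot_def, inner_add_right, real_inner_smul_right, inner_self_cross,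
    inner_self_eq_one_of_norm_eq_one hu]
  ring

lemma cross_rot (φ : ℝ) (x : E3) :
    cross u (rot u φ x) = cos φ • cross u x + sin φ • (⟪u, x⟫ • u - x) := by
  simp only [rot_def, cross_add, cross_smul, cross_cross, cross_self,
    inner_self_eq_one_of_norm_eq_one hu]
  module

lemma rot_rot (φ ψ : ℝ) (x : E3) : rot u φ (rot u ψ x) = rot u (φ + ψ) x := by
  rw [rot_def, cross_rot hu, inner_rot hu, rot_def, rot_def, cos_add, sin_add]
  module

lemma inner_rot_rot (θ : ℝ) (x y : E3) : ⟪rot u θ x, rot u θ y⟫ = ⟪x, y⟫ := by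
  have htriple : ⟪x, cross u y⟫ = -⟪cross u x, y⟫ := by
    rw [← inner_cross_left, cross_anticomm, inner_neg_left]
  simp only [rot_def, inner_add_left, inner_add_right, real_inner_smul_left, real_inner_smul_right,
    inner_cross_cross, inner_self_cross, inner_self_eq_one_of_norm_eq_one hu, htriple,
    real_inner_comm u x, real_inner_comm u (cross u x)]
  linear_combination (⟪x, y⟫ - ⟪u, x⟫ * ⟪u, y⟫) * sin_sq_add_cos_sq θ

end UnitAxis

-- The factor is the determinant of the matrix of `rot u θ`, which is `1` when `‖u‖ = 1`.
lemma inner_rot_cross_rot (u : E3) (θ : ℝ) (x y z : E3) :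
    ⟪rot u θ z, cross (rot u θ x) (rot u θ y)⟫ =
      (cos θ + (1 - cos θ) * ⟪u, u⟫) * (cos θ ^ 2 + sin θ ^ 2 * ⟪u, u⟫) * ⟪z, cross x y⟫ := by
  simp only [inner_eq_fin_three, rot_apply, cross_apply_zero, cross_apply_one, cross_apply_two]
  ring

structure IsSpecialOrthogonal (f : E3 → E3) : Prop where
  map_add : ∀ x y, f (x + y) = f x + f y
  map_smul : ∀ (r : ℝ) x, f (r • x) = r • f x
  inner_map_map : ∀ x y, ⟪f x, f y⟫ = ⟪x, y⟫
  map_cross : ∀ x y, f (cross x y) = cross (f x) (f y)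

lemma map_cross_of_inner_map_map_of_triple {f : E3 → E3} (hinner : ∀ x y, ⟪f x, f y⟫ = ⟪x, y⟫)
    (hsurj : Function.Surjective f) (htriple : ∀ x y z, ⟪f z, cross (f x) (f y)⟫ = ⟪z, cross x y⟫)
    (x y : E3) : f (cross x y) = cross (f x) (f y) := by
  obtain ⟨z, hz⟩ := hsurj (f (cross x y) - cross (f x) (f y))
  have h : ⟪f z, f (cross x y) - cross (f x) (f y)⟫ = 0 := by
    rw [inner_sub_right, hinner, htriple, sub_self]
  rwa [hz, inner_self_eq_zero, sub_eq_zero] at h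

lemma isSpecialOrthogonal_rot {u : E3} (hu : ‖u‖ = 1) (θ : ℝ) : IsSpecialOrthogonal (rot u θ) where
  map_add := rot_add u θ
  map_smul := rot_smul u θ
  inner_map_map := inner_rot_rot hu θ
  map_cross := by
    refine map_cross_of_inner_map_map_of_triple (inner_rot_rot hu θ)
      (fun y => ⟨rot u (-θ) y, by rw [rot_rot hu, add_neg_cancel, rot_zero]⟩) fun x y z => ?_
    rw [inner_rot_cross_rot, inner_self_eq_one_of_norm_eq_one hu]
    linear_combination ⟪z, cross x y⟫ * sin_sq_add_cos_sq θ

lemma isSpecialOrthogonal_mulVec {A : Matrix (Fin 3) (Fin 3) ℝ}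
    (hA : A ∈ orthogonalGroup (Fin 3) ℝ) (hdet : A.det = 1) :
    IsSpecialOrthogonal (fun x => toLp 2 (A *ᵥ ofLp x)) := by
  have hinner (x y : E3) : ⟪toLp 2 (A *ᵥ ofLp x), toLp 2 (A *ᵥ ofLp y)⟫ = ⟪x, y⟫ := by
    rw [inner_eq_dotProduct, inner_eq_dotProduct, ofLp_toLp, ofLp_toLp, dotProduct_mulVec,
      ← vecMul_transpose, vecMul_vecMul, (mem_orthogonalGroup_iff' _ _).mp hA, vecMul_one]
  refine ⟨fun x y => ?_, fun r x => ?_, hinner, ?_⟩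
  · simp [mulVec_add]
  · simp [mulVec_smul]
  refine map_cross_of_inner_map_map_of_triple hinner (fun y => ⟨toLp 2 (Aᵀ *ᵥ ofLp y), ?_⟩)
    fun x y z => ?_
  · dsimp only
    rw [ofLp_toLp, mulVec_mulVec, (mem_orthogonalGroup_iff _ _).mp hA, one_mulVec, toLp_ofLp]
  · have hrows : of ![A *ᵥ ofLp z, A *ᵥ ofLp x, A *ᵥ ofLp y] =
        of ![ofLp z, ofLp x, ofLp y] * Aᵀ := by
      ext i j
      fin_cases i <;> simp [mulVec, dotProduct, mul_apply, mul_comm]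
    simp only [inner_eq_dotProduct, cross, triple_product_eq_det]
    exact (congrArg det hrows).trans (by rw [det_mul, det_transpose, hdet, mul_one]; rfl)

namespace IsSpecialOrthogonal

variable {f g : E3 → E3}

lemma comp (hf : IsSpecialOrthogonal f) (hg : IsSpecialOrthogonal g) :
    IsSpecialOrthogonal (f ∘ g) where
  map_add x y := by simp only [Function.comp_apply, hg.map_add, hf.map_add]
  map_smul r x := by simp only [Function.comp_apply, hg.map_smul, hf.map_smul]
  inner_map_map x y := by simp only [Function.comp_apply, hf.inner_map_map, hg.inner_map_map]
  map_cross x y := by simp only [Function.comp_apply, hg.map_cross, hf.map_cross]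

lemma map_rot (hf : IsSpecialOrthogonal f) (w : E3) (φ : ℝ) (x : E3) :
    f (rot w φ x) = rot (f w) φ (f x) := by
  simp only [rot_def, hf.map_add, hf.map_smul, hf.map_cross, hf.inner_map_map]

end IsSpecialOrthogonal

lemma eq_zero_of_inner_eq_zero_of_inner_cross_eq_zero {u e d : E3} (hu : ‖u‖ = 1) (he : ‖e‖ = 1)
    (hue : ⟪u, e⟫ = 0) (hud : ⟪u, d⟫ = 0) (hed : ⟪e, d⟫ = 0) (hwd : ⟪cross u e, d⟫ = 0) :
    d = 0 := by
  have hw : ⟪cross u e, cross u e⟫ = 1 := by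
    rw [inner_cross_cross, inner_self_eq_one_of_norm_eq_one hu,
      inner_self_eq_one_of_norm_eq_one he, real_inner_comm u e, hue]
    ring
  have hcross : cross (cross u e) d = 0 := by
    rw [cross_anticomm, cross_cross, real_inner_comm e d, real_inner_comm u d, hed, hud]
    simp
  have h := cross_cross (cross u e) (cross u e) d
  rwa [hcross, cross_zero, hwd, hw, zero_smul, one_smul, zero_sub, eq_comm, neg_eq_zero] at h

lemma inner_self_smul_eq_of_inner_eq_zero {w X Y : E3} (hw : ‖w‖ = 1) (hX : ⟪w, X⟫ = 0)
    (hY : ⟪w, Y⟫ = 0) : ⟪X, X⟫ • Y = ⟪X, Y⟫ • X + ⟪cross w X, Y⟫ • cross w X := by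
  have hXY : cross X Y = ⟪cross w X, Y⟫ • w := by
    have h := cross_cross w w (cross X Y)
    rw [cross_cross w X Y, hX, hY, inner_self_eq_one_of_norm_eq_one hw, ← inner_cross_left] at h
    simp only [zero_smul, sub_zero, cross_zero, one_smul] at h
    linear_combination (norm := module) h
  have h := cross_cross X X Y
  rw [hXY, cross_smul, cross_anticomm X w] at h
  linear_combination (norm := module) h

lemma exists_cos_smul_add_sin_smul_cross_eq {w X Y : E3} (hw : ‖w‖ = 1) (hX : ⟪w, X⟫ = 0)
    (hY : ⟪w, Y⟫ = 0) (hXY : ⟪X, X⟫ = ⟪Y, Y⟫) : ∃ θ, cos θ • X + sin θ • cross w X = Y := by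
  by_cases hX0 : X = 0
  · rw [hX0, inner_zero_left, eq_comm, inner_self_eq_zero] at hXY
    exact ⟨0, by simp [hX0, hXY]⟩
  have hexp := inner_self_smul_eq_of_inner_eq_zero hw hX hY
  set r := ⟪X, X⟫
  set q := ⟪X, Y⟫
  set t := ⟪cross w X, Y⟫
  have hr : 0 < r := real_inner_self_pos.mpr hX0
  have hqt : q ^ 2 + t ^ 2 = r ^ 2 := by
    have h := congrArg (inner ℝ Y) hexp
    simp only [real_inner_smul_right, inner_add_right, ← hXY, real_inner_comm X Y,
      real_inner_comm (cross w X) Y] at h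
    linear_combination -h
  have hz : ‖(⟨q, t⟩ : ℂ)‖ = r := by
    rw [Complex.norm_def, Complex.normSq_mk, ← sq, ← sq, hqt, sqrt_sq hr.le]
  have hc := Complex.norm_mul_cos_arg ⟨q, t⟩
  have hs := Complex.norm_mul_sin_arg ⟨q, t⟩
  rw [hz] at hc hs
  refine ⟨Complex.arg ⟨q, t⟩, smul_right_injective E3 hr.ne' ?_⟩
  dsimp only
  rw [hexp, smul_add, smul_smul, smul_smul, hc, hs]

lemma rot_of_inner_eq_zero {w X : E3} (hX : ⟪w, X⟫ = 0) (θ : ℝ) :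
    rot w θ X = cos θ • X + sin θ • cross w X := by
  simp [rot_def, hX]

lemma exists_rot_eq {w x y : E3} (hw : ‖w‖ = 1) (hxy : ‖x‖ = ‖y‖) (h : ⟪w, x⟫ = ⟪w, y⟫) :
    ∃ θ, rot w θ x = y := by
  have hw1 := inner_self_eq_one_of_norm_eq_one (𝕜 := ℝ) hw
  have hperp (z : E3) : ⟪w, z - ⟪w, z⟫ • w⟫ = 0 := by
    rw [inner_sub_right, real_inner_smul_right, hw1, mul_one, sub_self]
  have hnorm (z : E3) : ⟪z - ⟪w, z⟫ • w, z - ⟪w, z⟫ • w⟫ = ‖z‖ ^ 2 - ⟪w, z⟫ ^ 2 := by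
    rw [← real_inner_self_eq_norm_sq]
    simp only [inner_sub_left, inner_sub_right, real_inner_smul_left, real_inner_smul_right, hw1,
      real_inner_comm w z]
    ring
  obtain ⟨θ, hθ⟩ := exists_cos_smul_add_sin_smul_cross_eq hw (hperp x) (hperp y)
    (by rw [hnorm, hnorm, hxy, h])
  refine ⟨θ, ?_⟩
  nth_rewrite 1 [← sub_add_cancel x (⟪w, x⟫ • w)]
  rw [rot_add, rot_smul, rot_self hw, rot_of_inner_eq_zero (hperp x), hθ, h, sub_add_cancel]

namespace IsSpecialOrthogonal

variable {f : E3 → E3} (hf : IsSpecialOrthogonal f)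
include hf

lemma norm_map (x : E3) : ‖f x‖ = ‖x‖ := by
  rw [norm_eq_sqrt_real_inner, norm_eq_sqrt_real_inner, hf.inner_map_map]

lemma eq_self_of_map_eq_self {u e : E3} (hu : ‖u‖ = 1) (he : ‖e‖ = 1) (hue : ⟪u, e⟫ = 0)
    (hfu : f u = u) (hfe : f e = e) (x : E3) : f x = x := by
  have horth {a : E3} (ha : f a = a) : ⟪a, f x - x⟫ = 0 := by
    rw [inner_sub_right]
    nth_rewrite 1 [← ha]
    rw [hf.inner_map_map, sub_self]
  have hw : f (cross u e) = cross u e := by rw [hf.map_cross, hfu, hfe]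
  exact sub_eq_zero.mp <| eq_zero_of_inner_eq_zero_of_inner_cross_eq_zero hu he hue
    (horth hfu) (horth hfe) (horth hw)

lemma exists_eq_rot_of_map_eq_self {u : E3} (hu : ‖u‖ = 1) (hfu : f u = u) :
    ∃ γ, ∀ x, f x = rot u γ x := by
  obtain ⟨e, he, hue, -⟩ := exists_norm_eq_one_inner_eq_zero (by simp) u u
  obtain ⟨γ, hγ⟩ := exists_rot_eq hu (hf.norm_map e).symm (by rw [← hf.inner_map_map, hfu])
  have hg := ((isSpecialOrthogonal_rot hu (-γ)).comp hf).eq_self_of_map_eq_self hu he hue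
    (by simp [hfu, rot_self hu]) (by simp [← hγ, rot_rot hu])
  refine ⟨γ, fun x => ?_⟩
  calc f x = rot u γ (rot u (-γ) (f x)) := by rw [rot_rot hu, add_neg_cancel, rot_zero]
    _ = rot u γ x := congrArg _ (hg x)

lemma exists_eq_rot_comp_rot {u : E3} (hu : ‖u‖ = 1) :
    ∃ w φ γ, ‖w‖ = 1 ∧ ∀ x, f x = rot w φ (rot u γ x) := by
  obtain ⟨w, hw, hwu, hwfu⟩ := exists_norm_eq_one_inner_eq_zero (by simp) u (f u)
  obtain ⟨φ, hφ⟩ := exists_rot_eq hw (hf.norm_map u).symm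
    (by rw [real_inner_comm, hwu, real_inner_comm, hwfu])
  obtain ⟨γ, hγ⟩ := ((isSpecialOrthogonal_rot hw (-φ)).comp hf).exists_eq_rot_of_map_eq_self hu
    (by simp [← hφ, rot_rot hw])
  refine ⟨w, φ, γ, hw, fun x => ?_⟩
  calc f x = rot w φ (rot w (-φ) (f x)) := by rw [rot_rot hw, add_neg_cancel, rot_zero]
    _ = rot w φ (rot u γ x) := congrArg _ (hγ x)

end IsSpecialOrthogonal

def IsAxisOfRevolution (S : Set E3) (w : E3) : Prop := ∀ φ, rot w φ '' S = S

lemma IsAxisOfRevolution.map {S : Set E3} {f : E3 → E3} (hf : IsSpecialOrthogonal f)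
    (hfS : f '' S = S) {w : E3} (hw : IsAxisOfRevolution S w) : IsAxisOfRevolution S (f w) := by
  intro φ
  have hcomm : rot (f w) φ ∘ f = f ∘ rot w φ := funext fun x => (hf.map_rot w φ x).symm
  rw [← hfS, Set.image_image, ← Function.comp_def, hcomm, Set.image_comp, hw φ]

lemma image_eq_of_forall_isAxisOfRevolution {S : Set E3}
    (hS : ∀ w : E3, ‖w‖ = 1 → IsAxisOfRevolution S w) {f : E3 → E3}
    (hf : IsSpecialOrthogonal f) : f '' S = S := by
  obtain ⟨w, φ, γ, hw, hfwu⟩ := hf.exists_eq_rot_comp_rot (u := EuclideanSpace.single 0 1) (by simp)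
  rw [funext hfwu, ← Set.image_image, hS _ (by simp) γ, hS w hw φ]

lemma inner_rot_apply_self {u : E3} (hu : ‖u‖ = 1) (b : E3) (θ : ℝ) :
    ⟪u, rot b θ u⟫ = cos θ + (1 - cos θ) * ⟪u, b⟫ ^ 2 := by
  simp only [rot_def, inner_add_right, real_inner_smul_right, inner_cross_self,
    inner_self_eq_one_of_norm_eq_one hu, real_inner_comm u b]
  ring

def IsCapOfAxes (S : Set E3) (u : E3) (t : ℝ) : Prop :=
  ∀ y : E3, ‖y‖ = 1 → t ≤ ⟪u, y⟫ → IsAxisOfRevolution S y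

section Cap

variable {S : Set E3} {u : E3} (hu : ‖u‖ = 1) (hSu : IsAxisOfRevolution S u)
include hu hSu

lemma isCapOfAxes_of_isAxisOfRevolution {b : E3} (hb : ‖b‖ = 1) (hSb : IsAxisOfRevolution S b) :
    IsCapOfAxes S u (2 * ⟪u, b⟫ ^ 2 - 1) := by
  intro y hy hyt
  set p := ⟪u, b⟫
  have hp : p ^ 2 ≤ 1 := by
    have := real_inner_mem_Icc_of_norm_eq_one hu hb
    nlinarith [this.1, this.2]
  have hy1 := real_inner_le_one_of_norm_eq_one hu hy
  obtain ⟨θ, hθ⟩ : ∃ θ, cos θ + (1 - cos θ) * p ^ 2 = ⟪u, y⟫ := by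
    rcases hp.lt_or_eq with hp | hp
    · set c := (⟪u, y⟫ - p ^ 2) / (1 - p ^ 2)
      have hc : c * (1 - p ^ 2) = ⟪u, y⟫ - p ^ 2 := div_mul_cancel₀ _ (by linarith)
      have hc1 : -1 ≤ c := by rw [le_div_iff₀ (by linarith)]; linarith
      have hc2 : c ≤ 1 := by rw [div_le_one₀ (by linarith)]; linarith
      exact ⟨arccos c, by rw [cos_arccos hc1 hc2]; linear_combination hc⟩
    · exact ⟨0, by rw [cos_zero, hp]; linarith⟩
  have hx := isSpecialOrthogonal_rot hb θ
  obtain ⟨ψ, hψ⟩ := exists_rot_eq hu ((hx.norm_map u).trans (hu.trans hy.symm))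
    ((inner_rot_apply_self hu b θ).trans hθ)
  rw [← hψ]
  exact (hSu.map hx (hSb θ)).map (isSpecialOrthogonal_rot hu ψ) (hSu ψ)

lemma IsCapOfAxes.two_mul {α : ℝ} (h : IsCapOfAxes S u (cos α)) :
    IsCapOfAxes S u (cos (2 * α)) := by
  obtain ⟨b, hb, hub⟩ := exists_norm_eq_one_inner_eq (by simp) hu ⟨neg_one_le_cos α, cos_le_one α⟩
  have := isCapOfAxes_of_isAxisOfRevolution hu hSu hb (h b hb hub.ge)
  rwa [hub, ← cos_two_mul] at this

lemma IsCapOfAxes.two_pow_mul {α : ℝ} (h : IsCapOfAxes S u (cos α)) (k : ℕ) :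
    IsCapOfAxes S u (cos (2 ^ k * α)) := by
  induction k with
  | zero => simpa using h
  | succ k ih => simpa only [pow_succ', mul_assoc] using ih.two_mul hu hSu

theorem forall_isAxisOfRevolution_of_abs_inner_lt_one {u' : E3} (hu' : ‖u'‖ = 1)
    (hSu' : IsAxisOfRevolution S u') (h : |⟪u, u'⟫| < 1) :
    ∀ w : E3, ‖w‖ = 1 → IsAxisOfRevolution S w := by
  have hp : ⟪u, u'⟫ ^ 2 < 1 := (sq_lt_one_iff_abs_lt_one _).mpr h
  set β := arccos (2 * ⟪u, u'⟫ ^ 2 - 1)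
  have hβ : 0 < β := arccos_pos.mpr (by linarith)
  have hcap : IsCapOfAxes S u (cos β) := by
    rw [cos_arccos (by nlinarith [sq_nonneg ⟪u, u'⟫]) (by linarith)]
    exact isCapOfAxes_of_isAxisOfRevolution hu hSu hu' hSu'
  -- a doubling `2 ^ k * β` lands in `[π / 2, π]`, where the cap reaches past the equator
  obtain ⟨k, hk₁, hk₂⟩ := exists_nat_pow_near ((one_le_div hβ).mpr (arccos_le_pi _)) one_lt_two
  rw [le_div_iff₀ hβ] at hk₁
  rw [div_lt_iff₀ hβ, pow_succ] at hk₂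
  have hcap0 : IsCapOfAxes S u (cos (π / 2)) := fun y hy hyt =>
    hcap.two_pow_mul hu hSu k y hy <|
      (cos_nonpos_of_pi_div_two_le_of_le (by linarith) (by linarith [pi_pos])).trans
        (cos_pi_div_two ▸ hyt)
  have hcap1 := hcap0.two_mul hu hSu
  rw [mul_div_cancel₀ _ two_ne_zero, cos_pi] at hcap1
  exact fun w hw => hcap1 w hw (neg_one_le_real_inner_of_norm_eq_one hu hw)

end Cap

lemma abs_inner_rot_apply_self_lt_one {u b : E3} (hu : ‖u‖ = 1) (hub₀ : ⟪u, b⟫ ≠ 0)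
    (hub₁ : |⟪u, b⟫| < 1) {θ : ℝ} (hθ : cos θ < 1) : |⟪u, rot b θ u⟫| < 1 := by
  have hp₀ : 0 < ⟪u, b⟫ ^ 2 := by positivity
  have hp₁ : ⟪u, b⟫ ^ 2 < 1 := (sq_lt_one_iff_abs_lt_one _).mpr hub₁
  rw [inner_rot_apply_self hu, abs_lt]
  constructor
  · nlinarith [neg_one_le_cos θ, mul_pos (sub_pos.mpr hθ) hp₀]
  · nlinarith [mul_pos (sub_pos.mpr hθ) (sub_pos.mpr hp₁)]

lemma cos_two_pi_div_lt_one {n : ℕ} (hn : 2 ≤ n) : cos (2 * π / n) < 1 := by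
  have hn' : (1 : ℝ) < n := by exact_mod_cast hn
  have hpos : 0 < 2 * π / n := by positivity
  refine (cos_le_one _).lt_of_ne fun h => hpos.ne' ?_
  exact (cos_eq_one_iff_of_lt_of_lt (by linarith [pi_pos]) (div_lt_self (by positivity) hn')).mp h

end ObliqueAxis

open ObliqueAxis in
/-- If `S` has infinite-order rotational symmetry about a unit axis `u`, is not
invariant under all of SO(3), and has order-`n` rotational symmetry about a unit axis
`v` neither orthogonal nor collinear to `u`, then `n = 1`. -/
theorem oblique_axis_trivial_order (S : Set (EuclideanSpace ℝ (Fin 3)))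
    (u : EuclideanSpace ℝ (Fin 3)) (hu : ‖u‖ = 1)
    (hSu : ∀ φ : ℝ, rot u φ '' S = S)
    (hnot : ¬ ∀ R : SO3, (fun x : EuclideanSpace ℝ (Fin 3) => WithLp.toLp 2 (R.1.1.mulVec (WithLp.ofLp x))) '' S = S)
    (v : EuclideanSpace ℝ (Fin 3)) (hv : ‖v‖ = 1)
    (hvu : (inner ℝ u v : ℝ) ≠ 0) (hne : v ≠ u) (hne' : v ≠ -u)
    (n : ℕ) (hn : 1 ≤ n) (hSv : rot v (2 * Real.pi / n) '' S = S) :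
    n = 1 := by
  by_contra hn₁
  have hrot := isSpecialOrthogonal_rot hv (2 * π / n)
  have huv : |⟪u, v⟫| < 1 :=
    abs_real_inner_lt_one_of_norm_eq_one hu hv hne.symm fun h => hne' (by rw [h, neg_neg])
  have hSu' : IsAxisOfRevolution S (rot v (2 * π / n) u) := IsAxisOfRevolution.map hrot hSv hSu
  have hall := forall_isAxisOfRevolution_of_abs_inner_lt_one hu hSu ((hrot.norm_map u).trans hu)
    hSu' (abs_inner_rot_apply_self_lt_one hu hvu huv (cos_two_pi_div_lt_one (by omega)))
  exact hnot fun R =>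
    image_eq_of_forall_isAxisOfRevolution hall (isSpecialOrthogonal_mulVec R.1.2 R.2)
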